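/- The shadow map φ_s^(2) of Section 6 possesses two independent rational invariants: for all c, x, y, z, u, x₁ in ℂ with c − x − y ≠ 0, if (c − x − y)·x₁ = c·u + 2·(x² − z²) + 3y·(x − z) − u·(y + z), then Σ₂(x₁, x, y, z) = Σ₂(x, y, z, u) and Σ₃(x₁, x, y, z) = Σ₃(x, y, z, u). -/
import Mathlib

/-- First invariant `Σ₂` of the shadow map `φ_s^(2)` of Section 6. -/
noncomputable def Sigma₂ (c x y z u : ℂ) : ℂ :=
  c * (x + y + z + u) - (y + z) * (x + 2*z + u + 2*y)

/-- Second invariant `Σ₃` of the shadow map `φ_s^(2)` of Section 6. -/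
noncomputable def Sigma₃ (c x y z u : ℂ) : ℂ :=
  2*c^2 * (x + y + z + u) + c * (x*u - z*u - x*y - 4*y^2 - 7*y*z - 4*z^2)
    - (y + z) * (2*y + x + z) * (u + y + 2*z)

/-- The shadow map `φ_s^(2)` of Section 6 possesses the two independent rational
invariants `Σ₂` and `Σ₃`. -/
theorem phi2_shadow_two_invariants (c x y z u x₁ : ℂ)
    (h : c - x - y ≠ 0)
    (hrec : (c - x - y) * x₁ =
      c*u + 2*(x^2 - z^2) + 3*y*(x - z) - u*(y + z)) :
    Sigma₂ c x₁ x y z = Sigma₂ c x y z u ∧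
    Sigma₃ c x₁ x y z = Sigma₃ c x y z u := by
  have hx : x₁ = (c*u + 2*(x^2 - z^2) + 3*y*(x - z) - u*(y + z)) / (c - x - y) := by
    field_simp
    linear_combination hrec
  subst hx
  constructor <;> (simp only [Sigma₂, Sigma₃]; field_simp; ring)
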